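/- arXiv:2302.09653 — 5 statements merged into one kernel-verified Lean document; each statement's English description precedes it below -/
import Mathlib

section
/- Let A and B be points of the Euclidean plane with ‖A‖ = ‖B‖ = r_e, let M = (A+B)/2 be their midpoint and ℓ = ‖M‖. If 0 < r_c ≤ r_e and ℓ < r_c, then the coverage proportion of the trajectory, namely the 1-dimensional Hausdorff measure of (segment[A,B] ∩ closedBall(0, r_c)) divided by dist(A,B), equals √((r_c² − ℓ²)/(r_e² − ℓ²)). (Proposition 1 of the paper.) -/
/-! Since `‖A‖ = ‖B‖`, the midpoint `M` is orthogonal to `B - A`, so by Pythagoras the point of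
parameter `t` on the chord has squared norm `ℓ² + (t - 1/2)² d²`, where `d = dist A B`.
Hence the chord meets the ball of radius `r` in the subsegment `|t - 1/2| ≤ √(r² - ℓ²) / d`,
of length `2 √(r² - ℓ²)`; at `t = 0` the same identity gives `d = 2 √(r_e² - ℓ²)`. -/

open MeasureTheory Metric

section Chord

variable {E : Type*} [NormedAddCommGroup E] [InnerProductSpace ℝ E] {A B : E}

theorem inner_midpoint_sub_eq_zero_of_norm_eq (h : ‖A‖ = ‖B‖) :
    inner ℝ (midpoint ℝ A B) (B - A) = 0 := by
  rw [midpoint_eq_smul_add, real_inner_smul_left, inner_add_left, inner_sub_right,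
    inner_sub_right, real_inner_comm B A, real_inner_self_eq_norm_sq,
    real_inner_self_eq_norm_sq, h]
  ring

theorem norm_lineMap_sq_of_norm_eq (h : ‖A‖ = ‖B‖) (t : ℝ) :
    ‖AffineMap.lineMap A B t‖ ^ 2 = ‖midpoint ℝ A B‖ ^ 2 + (t - 1 / 2) ^ 2 * dist A B ^ 2 := by
  have hline : AffineMap.lineMap A B t = midpoint ℝ A B + (t - 1 / 2) • (B - A) := by
    rw [AffineMap.lineMap_apply_module, midpoint_eq_smul_add, invOf_eq_inv]
    module
  rw [hline, norm_add_sq_real, real_inner_smul_right, inner_midpoint_sub_eq_zero_of_norm_eq h,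
    norm_smul, Real.norm_eq_abs, mul_pow, sq_abs, dist_comm, dist_eq_norm]
  ring

theorem dist_eq_two_mul_sqrt_of_norm_eq (h : ‖A‖ = ‖B‖) :
    dist A B = 2 * √(‖A‖ ^ 2 - ‖midpoint ℝ A B‖ ^ 2) := by
  have h0 := norm_lineMap_sq_of_norm_eq h 0
  rw [AffineMap.lineMap_apply_zero] at h0
  rw [show ‖A‖ ^ 2 - ‖midpoint ℝ A B‖ ^ 2 = (dist A B / 2) ^ 2 by linarith,
    Real.sqrt_sq (by positivity)]
  ring

theorem lineMap_preimage_closedBall_zero_of_norm_eq (h : ‖A‖ = ‖B‖) (hAB : A ≠ B) {r : ℝ}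
    (hr : ‖midpoint ℝ A B‖ ≤ r) :
    AffineMap.lineMap A B ⁻¹' closedBall 0 r
      = closedBall (1 / 2 : ℝ) (√(r ^ 2 - ‖midpoint ℝ A B‖ ^ 2) / dist A B) := by
  have hd : 0 < dist A B := dist_pos.mpr hAB
  have hr0 : 0 ≤ r := (norm_nonneg _).trans hr
  ext t
  rw [Set.mem_preimage, mem_closedBall, mem_closedBall, dist_zero_right, Real.dist_eq,
    le_div_iff₀ hd, Real.le_sqrt (by positivity) (by nlinarith [norm_nonneg (midpoint ℝ A B)]),
    ← sq_le_sq₀ (norm_nonneg _) hr0, norm_lineMap_sq_of_norm_eq h, mul_pow, sq_abs]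
  constructor <;> intro <;> linarith

theorem segment_inter_closedBall_zero_eq_image_lineMap (h : ‖A‖ = ‖B‖) (hAB : A ≠ B) {r : ℝ}
    (hℓ : ‖midpoint ℝ A B‖ ≤ r) (hr : r ≤ ‖A‖) :
    segment ℝ A B ∩ closedBall 0 r =
      AffineMap.lineMap A B ''
        closedBall (1 / 2 : ℝ) (√(r ^ 2 - ‖midpoint ℝ A B‖ ^ 2) / dist A B) := by
  have hd : 0 < dist A B := dist_pos.mpr hAB
  have hs : √(r ^ 2 - ‖midpoint ℝ A B‖ ^ 2) / dist A B ≤ 1 / 2 := by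
    rw [div_le_iff₀ hd, dist_eq_two_mul_sqrt_of_norm_eq h, ← mul_assoc,
      one_div_mul_cancel two_ne_zero, one_mul]
    gcongr
    exact (norm_nonneg _).trans hℓ
  rw [segment_eq_image_lineMap, ← Set.image_inter_preimage,
    lineMap_preimage_closedBall_zero_of_norm_eq h hAB hℓ, Set.inter_eq_right.mpr]
  rw [Real.closedBall_eq_Icc]
  exact Set.Icc_subset_Icc (by linarith) (by linarith)

theorem hausdorffMeasure_segment_inter_closedBall_zero_of_norm_eq [MeasurableSpace E]
    [BorelSpace E] (h : ‖A‖ = ‖B‖) (hAB : A ≠ B) {r : ℝ} (hℓ : ‖midpoint ℝ A B‖ ≤ r)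
    (hr : r ≤ ‖A‖) :
    μH[1] (segment ℝ A B ∩ closedBall 0 r) =
      ENNReal.ofReal (2 * √(r ^ 2 - ‖midpoint ℝ A B‖ ^ 2)) := by
  have hs : 0 ≤ √(r ^ 2 - ‖midpoint ℝ A B‖ ^ 2) / dist A B := by positivity
  rw [segment_inter_closedBall_zero_eq_image_lineMap h hAB hℓ hr, Real.closedBall_eq_Icc,
    ← segment_eq_Icc (by linarith), image_segment, hausdorffMeasure_segment, edist_dist,
    dist_lineMap_lineMap, Real.dist_eq, abs_of_nonpos (by linarith)]
  congr 1
  have hd : dist A B ≠ 0 := dist_ne_zero.mpr hAB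
  field_simp
  ring

end Chord

theorem coverage_proportion_general (r_e r_c : ℝ) (hce : r_c ≤ r_e)
    (A B : EuclideanSpace ℝ (Fin 2)) (hA : ‖A‖ = r_e) (hB : ‖B‖ = r_e)
    (M : EuclideanSpace ℝ (Fin 2)) (hM : M = midpoint ℝ A B)
    (ℓ : ℝ) (hℓ : ℓ = ‖M‖) (hℓc : ℓ < r_c) :
    (μH[1] (segment ℝ A B ∩ closedBall (0 : EuclideanSpace ℝ (Fin 2)) r_c)).toReal
      / dist A B = Real.sqrt ((r_c ^ 2 - ℓ ^ 2) / (r_e ^ 2 - ℓ ^ 2)) := by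
  subst hM hℓ hA
  have hAB : A ≠ B := by
    rintro rfl
    rw [midpoint_self] at hℓc
    linarith
  rw [hausdorffMeasure_segment_inter_closedBall_zero_of_norm_eq hB.symm hAB hℓc.le hce,
    ENNReal.toReal_ofReal (by positivity), dist_eq_two_mul_sqrt_of_norm_eq hB.symm,
    Real.sqrt_div' _ (by nlinarith [norm_nonneg (midpoint ℝ A B)]),
    mul_div_mul_left _ _ two_ne_zero]

/-- **Proposition 1 (Coverage proportion).** For a chord of the environment circle of
radius `r_e` with endpoints `A`, `B`, midpoint `M = (A+B)/2` and `ℓ = ‖M‖`, if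
`0 < r_c ≤ r_e` and `ℓ < r_c`, then the coverage proportion
`μH¹(segment[A,B] ∩ closedBall(0, r_c)) / dist(A,B)` equals `√((r_c² − ℓ²)/(r_e² − ℓ²))`. -/
theorem coverage_proportion (r_e r_c : ℝ) (hrc : 0 < r_c) (hce : r_c ≤ r_e)
    (A B : EuclideanSpace ℝ (Fin 2)) (hA : ‖A‖ = r_e) (hB : ‖B‖ = r_e)
    (M : EuclideanSpace ℝ (Fin 2)) (hM : M = midpoint ℝ A B)
    (ℓ : ℝ) (hℓ : ℓ = ‖M‖) (hℓc : ℓ < r_c) :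
    (μH[1] (segment ℝ A B ∩ closedBall (0 : EuclideanSpace ℝ (Fin 2)) r_c)).toReal
      / dist A B = Real.sqrt ((r_c ^ 2 - ℓ ^ 2) / (r_e ^ 2 - ℓ ^ 2)) :=
  coverage_proportion_general r_e r_c hce A B hA hB M hM ℓ hℓ hℓc
end

section
/- Let A and B be points of the Euclidean plane with ‖A‖ = ‖B‖ = r_e, let M = (A+B)/2 and ℓ = ‖M‖, and suppose 0 < r_c ≤ r_e and ℓ < r_c. Then the 1-dimensional Hausdorff measure of segment[A,B] ∩ closedBall(0, r_c) equals 2√(r_c² − ℓ²); that is, the portion of the chord lying inside the coverage area has length 2√(r_c² − ℓ²). -/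
/-!
Parametrize the chord from its midpoint as `t ↦ M + t • (B - M)`, `t ∈ [-1, 1]`. Since
`‖A‖ = ‖B‖`, `M` is orthogonal to `B - M`, so the squared norm along the chord is
`ℓ² + t² ‖B - M‖²`. The part inside the coverage ball is therefore `t ∈ [-c, c]` with
`c ‖B - M‖ = √(r_c² - ℓ²)`, and `c ≤ 1` because `‖B - M‖² = r_e² - ℓ²`; the line map scales
lengths by `‖B - M‖`, giving `2 √(r_c² - ℓ²)`.
-/

open MeasureTheory Metric AffineMap Set
open scoped InnerProductSpace

section

variable {E : Type*} [NormedAddCommGroup E] [InnerProductSpace ℝ E]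

theorem segment_eq_lineMap_midpoint_image_Icc (A B : E) :
    segment ℝ A B = lineMap (midpoint ℝ A B) B '' Icc (-1 : ℝ) 1 := by
  rw [← segment_eq_Icc (by norm_num), image_segment, lineMap_apply_one, lineMap_apply_module',
    midpoint_eq_smul_add, invOf_eq_inv]
  congr 1
  module

theorem inner_midpoint_sub_midpoint_eq_zero {A B : E} (h : ‖A‖ = ‖B‖) :
    ⟪midpoint ℝ A B, B - midpoint ℝ A B⟫_ℝ = 0 := by
  have hM : midpoint ℝ A B = (1 / 2 : ℝ) • (B + A) := by
    rw [midpoint_eq_smul_add, add_comm, invOf_eq_inv, one_div]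
  have hBM : B - midpoint ℝ A B = (1 / 2 : ℝ) • (B - A) := by rw [hM]; module
  rw [hBM, hM, real_inner_smul_left, real_inner_smul_right,
    (real_inner_add_sub_eq_zero_iff B A).2 h.symm, mul_zero, mul_zero]

theorem norm_lineMap_sq_of_inner_eq_zero {M B : E} (h : ⟪M, B - M⟫_ℝ = 0) (t : ℝ) :
    ‖lineMap M B t‖ ^ 2 = ‖M‖ ^ 2 + t ^ 2 * ‖B - M‖ ^ 2 := by
  rw [lineMap_apply_module', norm_add_sq_real, real_inner_smul_left, real_inner_comm,
    h, norm_smul, mul_pow, Real.norm_eq_abs, sq_abs]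
  ring

theorem lineMap_preimage_closedBall_zero {M B : E} (h : ⟪M, B - M⟫_ℝ = 0) (hMB : M ≠ B)
    {r : ℝ} (hr : ‖M‖ ≤ r) :
    lineMap M B ⁻¹' closedBall 0 r =
      Icc (-(√(r ^ 2 - ‖M‖ ^ 2) / ‖B - M‖)) (√(r ^ 2 - ‖M‖ ^ 2) / ‖B - M‖) := by
  have hd : 0 < ‖B - M‖ := norm_pos_iff.2 (sub_ne_zero.2 hMB.symm)
  set c := √(r ^ 2 - ‖M‖ ^ 2) / ‖B - M‖
  have hc : c ^ 2 * ‖B - M‖ ^ 2 = r ^ 2 - ‖M‖ ^ 2 := by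
    rw [div_pow, div_mul_cancel₀ _ (by positivity), Real.sq_sqrt (by nlinarith [norm_nonneg M])]
  ext t
  rw [mem_preimage, mem_closedBall_zero_iff, mem_Icc, ← abs_le,
    ← pow_le_pow_iff_left₀ (norm_nonneg _) ((norm_nonneg M).trans hr) two_ne_zero,
    norm_lineMap_sq_of_inner_eq_zero h, ← abs_of_nonneg (by positivity : 0 ≤ c), ← sq_le_sq,
    ← mul_le_mul_iff_of_pos_right (pow_pos hd 2) (b := t ^ 2), hc, le_sub_iff_add_le']

theorem hausdorffMeasure_lineMap_image_Icc [MeasurableSpace E] [BorelSpace E] (x y : E)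
    (a b : ℝ) :
    μH[1] (lineMap x y '' Icc a b) = ENNReal.ofReal (dist x y * (b - a)) := by
  rw [hausdorffMeasure_lineMap_image, hausdorffMeasure_real, Real.volume_Icc,
    ENNReal.ofReal_mul dist_nonneg, ← edist_dist, edist_nndist]
  rfl

end

theorem covered_length_general (r_e r_c : ℝ) (hce : r_c ≤ r_e)
    (A B : EuclideanSpace ℝ (Fin 2)) (hA : ‖A‖ = r_e) (hB : ‖B‖ = r_e)
    (M : EuclideanSpace ℝ (Fin 2)) (hM : M = midpoint ℝ A B)
    (ℓ : ℝ) (hℓ : ℓ = ‖M‖) (hℓc : ℓ < r_c) :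
    μH[1] (segment ℝ A B ∩ closedBall (0 : EuclideanSpace ℝ (Fin 2)) r_c)
      = ENNReal.ofReal (2 * Real.sqrt (r_c ^ 2 - ℓ ^ 2)) := by
  have horth : ⟪M, B - M⟫_ℝ = 0 := hM ▸ inner_midpoint_sub_midpoint_eq_zero (hA.trans hB.symm)
  have hpyth : ℓ ^ 2 + ‖B - M‖ ^ 2 = r_e ^ 2 := by
    simpa [hB, hℓ] using (norm_lineMap_sq_of_inner_eq_zero horth 1).symm
  have hℓ0 : 0 ≤ ℓ := hℓ ▸ norm_nonneg M
  have hd : 0 < ‖B - M‖ := by nlinarith [norm_nonneg (B - M)]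
  have hc : √(r_c ^ 2 - ℓ ^ 2) / ‖B - M‖ ≤ 1 := by
    rw [div_le_one hd, ← Real.sqrt_sq hd.le]
    exact Real.sqrt_le_sqrt (by nlinarith)
  rw [segment_eq_lineMap_midpoint_image_Icc, ← hM, ← image_inter_preimage,
    lineMap_preimage_closedBall_zero horth (fun h ↦ by simp [h] at hd)
      (hℓ ▸ hℓc.le), ← hℓ, Icc_inter_Icc, max_eq_right (by linarith), min_eq_right hc,
    hausdorffMeasure_lineMap_image_Icc, dist_eq_norm']
  congr 1
  field_simp
  ring

/-- **Inside-length computation.** For a chord of the circle of radius `r_e` with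
endpoints `A`, `B`, midpoint `M = (A+B)/2` and `ℓ = ‖M‖`, if `0 < r_c ≤ r_e` and
`ℓ < r_c`, then the 1-dimensional Hausdorff measure of
`segment[A,B] ∩ closedBall(0, r_c)` equals `2√(r_c² − ℓ²)`. -/
theorem covered_length (r_e r_c : ℝ) (hrc : 0 < r_c) (hce : r_c ≤ r_e)
    (A B : EuclideanSpace ℝ (Fin 2)) (hA : ‖A‖ = r_e) (hB : ‖B‖ = r_e)
    (M : EuclideanSpace ℝ (Fin 2)) (hM : M = midpoint ℝ A B)
    (ℓ : ℝ) (hℓ : ℓ = ‖M‖) (hℓc : ℓ < r_c) :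
    μH[1] (segment ℝ A B ∩ closedBall (0 : EuclideanSpace ℝ (Fin 2)) r_c)
      = ENNReal.ofReal (2 * Real.sqrt (r_c ^ 2 - ℓ ^ 2)) :=
  covered_length_general r_e r_c hce A B hA hB M hM ℓ hℓ hℓc
end

section
/- Let A and B be points of the Euclidean plane with ‖A‖ = ‖B‖ = r_e, let M = (A+B)/2, and let 0 < r_c ≤ r_e. Then the segment[A,B] intersects the open ball of radius r_c centered at the origin if and only if ‖M‖ < r_c. -/
/-!
Because `‖A‖ = ‖B‖`, the midpoint `M` is orthogonal to `B - A`, so by Pythagoras every point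
`M + s • (B - A)` of the chord has norm at least `‖M‖`. Thus `M`, which lies on the chord, is
its point closest to the origin, and the chord meets a ball around the origin iff `M` does.
-/

open Metric

section ChordMidpoint

variable {F : Type*} [NormedAddCommGroup F] [InnerProductSpace ℝ F]

theorem lineMap_eq_midpoint_add_smul_sub (A B : F) (t : ℝ) :
    AffineMap.lineMap A B t = midpoint ℝ A B + (t - 2⁻¹) • (B - A) := by
  rw [AffineMap.lineMap_apply_module, midpoint_eq_smul_add, invOf_eq_inv]
  module

theorem inner_midpoint_sub_eq_zero {A B : F} (h : ‖A‖ = ‖B‖) :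
    inner ℝ (midpoint ℝ A B) (B - A) = 0 := by
  rw [midpoint_eq_smul_add, real_inner_smul_left, add_comm,
    (real_inner_add_sub_eq_zero_iff B A).mpr h.symm, mul_zero]

theorem norm_midpoint_le_norm_lineMap {A B : F} (h : ‖A‖ = ‖B‖) (t : ℝ) :
    ‖midpoint ℝ A B‖ ≤ ‖AffineMap.lineMap A B t‖ := by
  have hperp : inner ℝ (midpoint ℝ A B) ((t - 2⁻¹) • (B - A)) = 0 := by
    rw [real_inner_smul_right, inner_midpoint_sub_eq_zero h, mul_zero]
  rw [lineMap_eq_midpoint_add_smul_sub]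
  refine nonneg_le_nonneg_of_sq_le_sq (norm_nonneg _) ?_
  rw [norm_add_sq_eq_norm_sq_add_norm_sq_real hperp]
  exact le_add_of_nonneg_right (mul_self_nonneg _)

theorem norm_midpoint_le_of_mem_segment {A B x : F} (h : ‖A‖ = ‖B‖)
    (hx : x ∈ segment ℝ A B) : ‖midpoint ℝ A B‖ ≤ ‖x‖ := by
  rw [segment_eq_image_lineMap] at hx
  obtain ⟨t, -, rfl⟩ := hx
  exact norm_midpoint_le_norm_lineMap h t

end ChordMidpoint

theorem segment_inter_ball_iff_general (r_e r_c : ℝ)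
    (A B : EuclideanSpace ℝ (Fin 2)) (hA : ‖A‖ = r_e) (hB : ‖B‖ = r_e)
    (M : EuclideanSpace ℝ (Fin 2)) (hM : M = midpoint ℝ A B) :
    (segment ℝ A B ∩ ball (0 : EuclideanSpace ℝ (Fin 2)) r_c).Nonempty ↔ ‖M‖ < r_c := by
  subst hM
  constructor
  · rintro ⟨x, hx, hx_ball⟩
    exact (norm_midpoint_le_of_mem_segment (hA.trans hB.symm) hx).trans_lt
      (mem_ball_zero_iff.mp hx_ball)
  · intro hM
    exact ⟨midpoint ℝ A B, midpoint_mem_segment A B, mem_ball_zero_iff.mpr hM⟩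

/-- A chord with endpoints `A`, `B` on the circle of radius `r_e` enters the open
coverage ball of radius `r_c` (with `0 < r_c ≤ r_e`) iff its midpoint `M = (A+B)/2`
satisfies `‖M‖ < r_c`. -/
theorem segment_inter_ball_iff (r_e r_c : ℝ) (hre : 0 < r_e) (hrc : 0 < r_c)
    (hce : r_c ≤ r_e)
    (A B : EuclideanSpace ℝ (Fin 2)) (hA : ‖A‖ = r_e) (hB : ‖B‖ = r_e)
    (M : EuclideanSpace ℝ (Fin 2)) (hM : M = midpoint ℝ A B) :
    (segment ℝ A B ∩ ball (0 : EuclideanSpace ℝ (Fin 2)) r_c).Nonempty ↔ ‖M‖ < r_c :=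
  segment_inter_ball_iff_general r_e r_c A B hA hB M hM
end

section
/- For r_e = 1 and r_c = 1/2, the expected coverage proportion under uniformly distributed endpoints strictly exceeds that under uniformly distributed midpoints: (1/(2π)) ∫_{2π/3}^{4π/3} √((1/4 − (1+cos b)/2)/(1 − (1+cos b)/2)) db > ∫₀^{1/2} 2l·√((1/4 − l²)/(1 − l²)) dl. -/
open Real intervalIntegral

/-!
For `cos b ∈ [-1, -1/2]` the radicand `y = (-1/2 - cos b) / (1 - cos b)` lies in `[0, 1/4]`, so
`√y ≥ 2y ≥ -1/2 - cos b`; integrating gives `√3 - π/3` as a lower bound for the UDE integral.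
For `l ∈ [0, 1/2]` the radicand is at most `(1 - 4l²)/3`, and AM–GM `√y ≤ (5y/2 + 2/5)/2`
bounds the UDM integrand by the cubic `37l/30 - 10l³/3`, whose integral is `49/480`.
Finally `49/480 < (√3 - π/3)/(2π)` because `π < 3.15` and `√3 > 1.732`.
-/

lemma div_le_sqrt_of_le_sq {a y : ℝ} (ha : 0 < a) (hy : y ≤ a ^ 2) : y / a ≤ √y := by
  rcases le_or_gt y 0 with hy0 | hy0
  · exact (div_nonpos_of_nonpos_of_nonneg hy0 ha.le).trans (sqrt_nonneg y)
  · calc y / a ≤ y / √y :=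
          div_le_div_of_nonneg_left hy0.le (sqrt_pos.2 hy0) ((sqrt_le_left ha.le).2 hy)
      _ = √y := div_sqrt

lemma sqrt_le_div_add {y k : ℝ} (hy : 0 ≤ y) (hk : 0 < k) : √y ≤ (y / k + k) / 2 := by
  rw [le_div_iff₀ two_pos, div_add' _ _ _ hk.ne', le_div_iff₀ hk]
  nlinarith [sq_nonneg (√y - k), sq_sqrt hy]

lemma neg_half_sub_le_sqrt_ratio {c : ℝ} (hc : -1 ≤ c) :
    -1 / 2 - c ≤ √((1 / 4 - (1 + c) / 2) / (1 - (1 + c) / 2)) := by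
  rcases le_or_gt c (-1 / 2) with hc' | hc'
  · have hden : 0 < 1 - (1 + c) / 2 := by linarith
    have hratio : (1 / 4 - (1 + c) / 2) / (1 - (1 + c) / 2) ≤ (1 / 2) ^ 2 := by
      rw [div_le_iff₀ hden]; linarith
    calc -1 / 2 - c ≤ (1 / 4 - (1 + c) / 2) / (1 - (1 + c) / 2) / (1 / 2) := by
          rw [le_div_iff₀ (by norm_num), le_div_iff₀ hden]; nlinarith
      _ ≤ _ := div_le_sqrt_of_le_sq (by norm_num) hratio
  · exact (by linarith : -1 / 2 - c ≤ 0).trans (sqrt_nonneg _)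

lemma two_mul_mul_sqrt_ratio_le_cubic {l : ℝ} (hl₀ : 0 ≤ l) (hl : l ≤ 1 / 2) :
    2 * l * √((1 / 4 - l ^ 2) / (1 - l ^ 2)) ≤ 37 / 30 * l - 10 / 3 * l ^ 3 := by
  have hden : 3 / 4 ≤ 1 - l ^ 2 := by nlinarith
  have hnum : 0 ≤ 1 / 4 - l ^ 2 := by nlinarith
  have hratio : (1 / 4 - l ^ 2) / (1 - l ^ 2) ≤ (1 - 4 * l ^ 2) / 3 := by
    rw [div_le_iff₀ (by linarith)]; nlinarith
  have hsqrt := sqrt_le_div_add (k := 2 / 5)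
    (div_nonneg hnum (by linarith : (0 : ℝ) ≤ 1 - l ^ 2)) (by norm_num)
  calc 2 * l * √((1 / 4 - l ^ 2) / (1 - l ^ 2))
      ≤ 2 * l * (((1 - 4 * l ^ 2) / 3 / (2 / 5) + 2 / 5) / 2) := by
        gcongr
        exact hsqrt.trans (by gcongr)
    _ = 37 / 30 * l - 10 / 3 * l ^ 3 := by ring

lemma integral_neg_half_sub_cos :
    ∫ b in (2 * π / 3)..(4 * π / 3), (-1 / 2 - cos b) = √3 - π / 3 := by
  have h₁ : sin (2 * π / 3) = √3 / 2 := by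
    rw [show 2 * π / 3 = π - π / 3 by ring, sin_pi_sub, sin_pi_div_three]
  have h₂ : sin (4 * π / 3) = -(√3 / 2) := by
    rw [show 4 * π / 3 = π / 3 + π by ring, sin_add_pi, sin_pi_div_three]
  rw [integral_sub intervalIntegrable_const intervalIntegrable_cos, integral_const, integral_cos,
    h₁, h₂, smul_eq_mul]
  ring

lemma integral_cubic_majorant :
    ∫ l in (0 : ℝ)..(1 / 2), (37 / 30 * l - 10 / 3 * l ^ 3) = 49 / 480 := by
  rw [integral_sub ((by fun_prop : Continuous fun l : ℝ => 37 / 30 * l).intervalIntegrable _ _)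
      ((by fun_prop : Continuous fun l : ℝ => 10 / 3 * l ^ 3).intervalIntegrable _ _),
    integral_const_mul, integral_const_mul, integral_id, integral_pow]
  norm_num

lemma intervalIntegrable_UDE_integrand :
    IntervalIntegrable (fun b => √((1 / 4 - (1 + cos b) / 2) / (1 - (1 + cos b) / 2)))
      MeasureTheory.volume (2 * π / 3) (4 * π / 3) := by
  refine ContinuousOn.intervalIntegrable (ContinuousOn.sqrt (ContinuousOn.div (by fun_prop)
    (by fun_prop) fun b hb hzero => ?_))
  rw [Set.uIcc_of_le (by linarith [pi_pos])] at hb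
  have hcos : cos b = 1 := by linarith
  rw [cos_eq_one_iff_of_lt_of_lt (by linarith [hb.1, pi_pos]) (by linarith [hb.2, pi_pos])] at hcos
  linarith [hb.1, pi_pos]

lemma intervalIntegrable_UDM_integrand :
    IntervalIntegrable (fun l : ℝ => 2 * l * √((1 / 4 - l ^ 2) / (1 - l ^ 2)))
      MeasureTheory.volume 0 (1 / 2) := by
  refine ContinuousOn.intervalIntegrable (ContinuousOn.mul (by fun_prop) (ContinuousOn.sqrt
    (ContinuousOn.div (by fun_prop) (by fun_prop) fun l hl => ?_)))
  rw [Set.uIcc_of_le (by norm_num)] at hl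
  nlinarith [hl.1, hl.2]

lemma sqrt_three_sub_pi_div_three_le_integral_UDE :
    √3 - π / 3 ≤
      ∫ b in (2 * π / 3)..(4 * π / 3), √((1 / 4 - (1 + cos b) / 2) / (1 - (1 + cos b) / 2)) :=
  integral_neg_half_sub_cos ▸ integral_mono (by linarith [pi_pos])
    (intervalIntegrable_const.sub intervalIntegrable_cos) intervalIntegrable_UDE_integrand
    fun b => neg_half_sub_le_sqrt_ratio (neg_one_le_cos b)

lemma integral_UDM_le :
    ∫ l in (0 : ℝ)..(1 / 2), 2 * l * √((1 / 4 - l ^ 2) / (1 - l ^ 2)) ≤ 49 / 480 :=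
  integral_cubic_majorant ▸ integral_mono_on (by norm_num) intervalIntegrable_UDM_integrand
    ((by fun_prop : Continuous fun l : ℝ => 37 / 30 * l - 10 / 3 * l ^ 3).intervalIntegrable _ _)
    fun l hl => two_mul_mul_sqrt_ratio_le_cubic hl.1 hl.2

/-- For `r_e = 1`, `r_c = 1/2` (`ρ = 0.5`), the expected coverage proportion under
uniformly distributed endpoints strictly exceeds that under uniformly distributed
midpoints. -/
theorem UDE_gt_UDM_at_half :
    (1 / (2 * π)) * (∫ b in (2 * π / 3)..(4 * π / 3),
        Real.sqrt ((1 / 4 - (1 + cos b) / 2) / (1 - (1 + cos b) / 2))) >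
      ∫ l in (0 : ℝ)..(1 / 2), 2 * l * Real.sqrt ((1 / 4 - l ^ 2) / (1 - l ^ 2)) := by
  have hE := sqrt_three_sub_pi_div_three_le_integral_UDE
  have hM := mul_le_mul_of_nonneg_right integral_UDM_le pi_pos.le
  have hπ := pi_lt_d2
  have h3 : (1.732 : ℝ) < √3 := lt_sqrt_of_sq_lt (by norm_num)
  rw [gt_iff_lt, one_div_mul_eq_div, lt_div_iff₀ (by positivity)]
  nlinarith
end

section
/- For r_e = 1 and r_c = 9/10, the expected coverage proportion under uniformly distributed midpoints strictly exceeds that under uniformly distributed endpoints: (1/(2π)) ∫_{π−2·arcsin(9/10)}^{π+2·arcsin(9/10)} √((81/100 − (1+cos b)/2)/(1 − (1+cos b)/2)) db < ∫₀^{9/10} 2l·√((81/100 − l²)/(1 − l²)) dl. -/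
/-!
Both expectations are elementary functions of `ρ ∈ (0, 1)`:
`E[P_UDE] = 1 - √(1 - ρ²)` and `E[P_UDM] = ρ - (1 - ρ²) · artanh ρ`.
Each follows from the fundamental theorem of calculus with an explicit primitive, and at
`ρ = 9/10` the comparison reduces to `√(19/100) > 43/100` and `artanh (9/10) = (log 19)/2 < 3/2`.
-/

open Real Set

theorem Real.hasDerivAt_artanh {x : ℝ} (hx : x ∈ Ioo (-1) 1) :
    HasDerivAt artanh (1 / (1 - x ^ 2)) x := by
  obtain ⟨h₁, h₂⟩ := hx
  have hq : 0 < (1 + x) / (1 - x) := div_pos (by linarith) (by linarith)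
  have hf : HasDerivAt (fun y => (1 + y) / (1 - y)) (2 / (1 - x) ^ 2) x :=
    (((hasDerivAt_id' x).const_add 1).fun_div ((hasDerivAt_id' x).const_sub 1)
      (by linarith)).congr_deriv (by ring)
  show HasDerivAt (fun y => log √((1 + y) / (1 - y))) _ x
  refine ((hf.sqrt hq.ne').log (sqrt_pos.2 hq).ne').congr_deriv ?_
  rw [div_div, mul_assoc, mul_self_sqrt hq.le, show 1 - x ^ 2 = (1 - x) * (1 + x) by ring]
  field_simp [show 1 - x ≠ 0 by linarith, show 1 + x ≠ 0 by linarith]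

theorem Real.continuousOn_artanh : ContinuousOn artanh (Ioo (-1) 1) :=
  fun _ hx => (hasDerivAt_artanh hx).continuousAt.continuousWithinAt

theorem HasDerivAt.arcsin {f : ℝ → ℝ} {f' x : ℝ} (hf : HasDerivAt f f' x) (h : f x ^ 2 < 1) :
    HasDerivAt (fun y => arcsin (f y)) (f' / √(1 - f x ^ 2)) x := by
  have h₁ : f x ≠ -1 := by rintro hx; rw [hx] at h; norm_num at h
  have h₂ : f x ≠ 1 := by rintro hx; rw [hx] at h; norm_num at h
  exact ((hasDerivAt_arcsin h₁ h₂).comp x hf).congr_deriv (one_div_mul_eq_div _ _)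

variable {ρ : ℝ}

noncomputable def expectedCoverageUDM (ρ : ℝ) : ℝ :=
  ∫ l in (0 : ℝ)..ρ, 2 * l * √((ρ ^ 2 - l ^ 2) / (1 - l ^ 2))

noncomputable def primitiveUDM (ρ l : ℝ) : ℝ :=
  (1 - ρ ^ 2) * artanh √((ρ ^ 2 - l ^ 2) / (1 - l ^ 2))
    - (1 - l ^ 2) * √((ρ ^ 2 - l ^ 2) / (1 - l ^ 2))

theorem sqrt_div_one_sub_sq_mem_Ioo {l : ℝ} (hρ : ρ ^ 2 < 1) (hl : l ^ 2 ≤ ρ ^ 2) :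
    √((ρ ^ 2 - l ^ 2) / (1 - l ^ 2)) ∈ Ioo (-1) 1 := by
  have hden : 0 < 1 - l ^ 2 := by linarith
  refine ⟨by linarith [sqrt_nonneg ((ρ ^ 2 - l ^ 2) / (1 - l ^ 2))], ?_⟩
  rw [sqrt_lt' one_pos, one_pow, div_lt_one hden]
  linarith

theorem hasDerivAt_primitiveUDM {l : ℝ} (hl : l ∈ Ioo 0 ρ) (hρ : ρ < 1) :
    HasDerivAt (primitiveUDM ρ) (2 * l * √((ρ ^ 2 - l ^ 2) / (1 - l ^ 2))) l := by
  obtain ⟨hl0, hlρ⟩ := hl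
  set u := fun y : ℝ => √((ρ ^ 2 - y ^ 2) / (1 - y ^ 2))
  have hden : 0 < 1 - l ^ 2 := by nlinarith
  have hnum : 0 < ρ ^ 2 - l ^ 2 := by nlinarith
  have hu_sq : u l ^ 2 = (ρ ^ 2 - l ^ 2) / (1 - l ^ 2) := sq_sqrt (by positivity)
  have hu : DifferentiableAt ℝ u l :=
    (show DifferentiableAt ℝ (fun y : ℝ => (ρ ^ 2 - y ^ 2) / (1 - y ^ 2)) l by
      fun_prop (disch := exact hden.ne')).sqrt (div_pos hnum hden).ne'
  have hartanh := hasDerivAt_artanh (x := u l)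
    (sqrt_div_one_sub_sq_mem_Ioo (by nlinarith) (by nlinarith))
  -- The `deriv u l` terms cancel because `(1 - ρ²) / (1 - u²) = 1 - l²`.
  refine (((hartanh.comp l hu.hasDerivAt).const_mul (1 - ρ ^ 2)).sub
    (((hasDerivAt_pow 2 l).const_sub 1).mul hu.hasDerivAt)).congr_deriv ?_
  have h1u : 1 - u l ^ 2 = (1 - ρ ^ 2) / (1 - l ^ 2) := by
    rw [hu_sq]; field_simp; ring
  show _ = 2 * l * u l
  rw [h1u]
  field_simp [show 1 - ρ ^ 2 ≠ 0 by nlinarith]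
  ring

theorem expectedCoverageUDM_eq (hρ0 : 0 < ρ) (hρ1 : ρ < 1) :
    expectedCoverageUDM ρ = ρ - (1 - ρ ^ 2) * artanh ρ := by
  have hcont : ContinuousOn (fun y : ℝ => √((ρ ^ 2 - y ^ 2) / (1 - y ^ 2))) (Icc 0 ρ) := by
    refine ContinuousOn.sqrt (ContinuousOn.div (by fun_prop) (by fun_prop) ?_)
    intro y hy
    nlinarith [hy.1, hy.2]
  have hartanh : ContinuousOn (fun y : ℝ => artanh √((ρ ^ 2 - y ^ 2) / (1 - y ^ 2))) (Icc 0 ρ) :=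
    ContinuousOn.comp (g := artanh) continuousOn_artanh hcont fun y hy => sqrt_div_one_sub_sq_mem_Ioo (by nlinarith) (by nlinarith [hy.1, hy.2])
  rw [expectedCoverageUDM, intervalIntegral.integral_eq_sub_of_hasDerivAt_of_le hρ0.le
    ((hartanh.const_mul _).sub (ContinuousOn.mul (by fun_prop) hcont))
    (fun l hl => hasDerivAt_primitiveUDM hl hρ1)
    ((ContinuousOn.mul (by fun_prop) hcont).intervalIntegrable_of_Icc hρ0.le)]
  simp [sqrt_sq hρ0.le]

noncomputable def expectedCoverageUDE (ρ : ℝ) : ℝ :=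
  (1 / (2 * π)) * ∫ b in (π - 2 * arcsin ρ)..(π + 2 * arcsin ρ),
    √((ρ ^ 2 - (1 + cos b) / 2) / (1 - (1 + cos b) / 2))

/- Substituting `cos h = ρ sin ψ` turns `√(ρ² - cos² h) / sin h dh` into
`((1 - ρ²) / (1 - ρ² sin² ψ) - 1) dψ`, whose primitive `√(1 - ρ²) arctan (√(1 - ρ²) tan ψ) - ψ`
is this function of `h`. -/
noncomputable def primitiveUDE (ρ h : ℝ) : ℝ :=
  √(1 - ρ ^ 2) * arcsin (√(1 - ρ ^ 2) * cos h / (ρ * sin h)) - arcsin (cos h / ρ)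

theorem hasDerivAt_primitiveUDE {h : ℝ} (hρ0 : 0 < ρ) (hρ1 : ρ ≤ 1) (hsin : 0 < sin h)
    (hcos : cos h ^ 2 < ρ ^ 2) :
    HasDerivAt (primitiveUDE ρ) (√((ρ ^ 2 - cos h ^ 2) / (1 - cos h ^ 2))) h := by
  set c := √(1 - ρ ^ 2)
  set T := √(ρ ^ 2 - cos h ^ 2)
  have hc : c ^ 2 = 1 - ρ ^ 2 := sq_sqrt (by nlinarith)
  have hT0 : 0 < T := sqrt_pos.2 (by linarith)
  have hT : T ^ 2 = ρ ^ 2 - cos h ^ 2 := sq_sqrt (by linarith)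
  have hpy := sin_sq_add_cos_sq h
  have h₁ : √(1 - (cos h / ρ) ^ 2) = T / ρ := by
    rw [← sqrt_sq (div_pos hT0 hρ0).le, div_pow T, hT]
    congr 1
    field_simp
  have h₂ : √(1 - (c * cos h / (ρ * sin h)) ^ 2) = T / (ρ * sin h) := by
    rw [← sqrt_sq (div_pos hT0 (mul_pos hρ0 hsin)).le, div_pow T, hT]
    congr 1
    field_simp
    rw [hc]
    linear_combination ρ ^ 2 * hpy
  have hlt₁ : (cos h / ρ) ^ 2 < 1 := by
    rw [div_pow, div_lt_one (by positivity)]; exact hcos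
  have hlt₂ : (c * cos h / (ρ * sin h)) ^ 2 < 1 := by
    rw [div_pow, div_lt_one (by positivity), mul_pow, mul_pow, hc]
    nlinarith
  have d₁ := ((hasDerivAt_cos h).div_const ρ).arcsin hlt₁
  have d₂ := ((((hasDerivAt_cos h).const_mul c).fun_div ((hasDerivAt_sin h).const_mul ρ)
    (by positivity)).arcsin hlt₂).const_mul c
  refine (d₂.sub d₁).congr_deriv ?_
  rw [h₁, h₂, sqrt_div' _ (by nlinarith), show 1 - cos h ^ 2 = sin h ^ 2 by linarith,
    sqrt_sq hsin.le]
  field_simp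
  linear_combination (-c ^ 2 + 1) * hpy - hc - hT

theorem continuousAt_primitiveUDE {h : ℝ} (hρ : ρ ≠ 0) (hsin : sin h ≠ 0) :
    ContinuousAt (primitiveUDE ρ) h := by
  unfold primitiveUDE
  fun_prop (disch := positivity)

theorem cos_sq_lt_of_mem_Ioo {h : ℝ} (hρ : ρ ∈ Icc (-1) 1)
    (hh : h ∈ Ioo (π / 2 - arcsin ρ) (π / 2 + arcsin ρ)) : cos h ^ 2 < ρ ^ 2 := by
  obtain ⟨hh₁, hh₂⟩ := hh
  have hθ := arcsin_le_pi_div_two ρ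
  have hlt : sin (π / 2 - h) < sin (arcsin ρ) :=
    sin_lt_sin_of_lt_of_le_pi_div_two (by linarith) hθ (by linarith)
  have hgt : sin (-arcsin ρ) < sin (π / 2 - h) :=
    sin_lt_sin_of_lt_of_le_pi_div_two (by linarith) (by linarith) (by linarith)
  rw [sin_pi_div_two_sub, sin_arcsin hρ.1 hρ.2] at hlt
  rw [sin_pi_div_two_sub, sin_neg, sin_arcsin hρ.1 hρ.2] at hgt
  nlinarith

theorem one_add_cos_div_two (b : ℝ) : (1 + cos b) / 2 = cos (b / 2) ^ 2 := by
  rw [cos_sq, mul_div_cancel₀ b two_ne_zero]; ring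

theorem primitiveUDE_pi_div_two_add_arcsin (hρ0 : 0 < ρ) (hρ1 : ρ < 1) :
    primitiveUDE ρ (π / 2 + arcsin ρ) = (1 - √(1 - ρ ^ 2)) * (π / 2) := by
  have hc : √(1 - ρ ^ 2) ≠ 0 := (sqrt_pos.2 (by nlinarith)).ne'
  rw [primitiveUDE, add_comm, cos_add_pi_div_two, sin_add_pi_div_two, cos_arcsin,
    sin_arcsin (by linarith) hρ1.le, mul_neg, neg_div, neg_div,
    show √(1 - ρ ^ 2) * ρ / (ρ * √(1 - ρ ^ 2)) = 1 by field_simp, div_self hρ0.ne', arcsin_neg_one]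
  ring

theorem primitiveUDE_pi_div_two_sub_arcsin (hρ0 : 0 < ρ) (hρ1 : ρ < 1) :
    primitiveUDE ρ (π / 2 - arcsin ρ) = -((1 - √(1 - ρ ^ 2)) * (π / 2)) := by
  have hc : √(1 - ρ ^ 2) ≠ 0 := (sqrt_pos.2 (by nlinarith)).ne'
  rw [primitiveUDE, cos_pi_div_two_sub, sin_pi_div_two_sub, cos_arcsin,
    sin_arcsin (by linarith) hρ1.le,
    show √(1 - ρ ^ 2) * ρ / (ρ * √(1 - ρ ^ 2)) = 1 by field_simp, div_self hρ0.ne', arcsin_one]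
  ring

theorem expectedCoverageUDE_eq (hρ0 : 0 < ρ) (hρ1 : ρ < 1) :
    expectedCoverageUDE ρ = 1 - √(1 - ρ ^ 2) := by
  set θ := arcsin ρ
  have hθ0 : 0 < θ := arcsin_pos.2 hρ0
  have hθ1 : θ < π / 2 := arcsin_lt_pi_div_two.2 hρ1
  have hsin : ∀ b ∈ Icc (π - 2 * θ) (π + 2 * θ), 0 < sin (b / 2) := fun b hb =>
    sin_pos_of_pos_of_lt_pi (by linarith [hb.1]) (by linarith [hb.2])
  have hF := fun b (hb : b ∈ Ioo (π - 2 * θ) (π + 2 * θ)) =>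
    ((hasDerivAt_primitiveUDE hρ0 hρ1.le (hsin b (Ioo_subset_Icc_self hb))
      (cos_sq_lt_of_mem_Ioo ⟨by linarith, hρ1.le⟩ ⟨by linarith [hb.1], by linarith [hb.2]⟩)).comp b
      ((hasDerivAt_id' b).div_const 2)).const_mul 2
  rw [expectedCoverageUDE, intervalIntegral.integral_eq_sub_of_hasDerivAt_of_le (by linarith) ?_
    (fun b hb => (hF b hb).congr_deriv ?_) ?_]
  · simp only [Function.comp]
    rw [show (π + 2 * θ) / 2 = π / 2 + θ by ring, show (π - 2 * θ) / 2 = π / 2 - θ by ring,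
      primitiveUDE_pi_div_two_add_arcsin hρ0 hρ1, primitiveUDE_pi_div_two_sub_arcsin hρ0 hρ1]
    field_simp
    ring
  · exact fun b hb => (((continuousAt_primitiveUDE hρ0.ne' (hsin b hb).ne').comp
      (f := fun x : ℝ => x / 2) (by fun_prop)).const_mul 2).continuousWithinAt
  · refine ContinuousOn.intervalIntegrable_of_Icc (by linarith) (ContinuousOn.sqrt
      (ContinuousOn.div (by fun_prop) (by fun_prop) fun b hb => ?_))
    rw [one_add_cos_div_two]
    nlinarith [sin_sq_add_cos_sq (b / 2), hsin b hb]
  · rw [one_add_cos_div_two]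
    ring

theorem artanh_nine_tenths_lt : artanh (9 / 10) < 3 / 2 := by
  rw [artanh_eq_half_log ⟨by norm_num, by norm_num⟩, show (1 + 9 / 10) / (1 - 9 / 10) = (19 : ℝ) by
    norm_num]
  have h19 : (19 : ℝ) < exp 3 := by
    rw [show (3 : ℝ) = 1 + 1 + 1 by norm_num, exp_add, exp_add]
    nlinarith [exp_one_gt_d9]
  have := (log_lt_iff_lt_exp (by norm_num)).2 h19
  linarith

theorem expectedCoverageUDE_lt_expectedCoverageUDM_nine_tenths :
    expectedCoverageUDE (9 / 10) < expectedCoverageUDM (9 / 10) := by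
  rw [expectedCoverageUDE_eq (by norm_num) (by norm_num),
    expectedCoverageUDM_eq (by norm_num) (by norm_num)]
  have hsqrt : 43 / 100 < √(1 - (9 / 10 : ℝ) ^ 2) := (lt_sqrt (by norm_num)).2 (by norm_num)
  linarith [artanh_nine_tenths_lt]

/-- For `r_e = 1`, `r_c = 9/10` (`ρ = 0.9`), the expected coverage proportion under
uniformly distributed midpoints strictly exceeds that under uniformly distributed
endpoints. -/
theorem UDE_lt_UDM_at_nine_tenths :
    (1 / (2 * π)) * (∫ b in (π - 2 * arcsin (9 / 10))..(π + 2 * arcsin (9 / 10)),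
        Real.sqrt ((81 / 100 - (1 + cos b) / 2) / (1 - (1 + cos b) / 2))) <
      ∫ l in (0 : ℝ)..(9 / 10), 2 * l * Real.sqrt ((81 / 100 - l ^ 2) / (1 - l ^ 2)) := by
  simpa only [expectedCoverageUDE, expectedCoverageUDM, show ((9 : ℝ) / 10) ^ 2 = 81 / 100 by
    norm_num] using expectedCoverageUDE_lt_expectedCoverageUDM_nine_tenths
end
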